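/- arXiv:1607.04394 — 4 statements merged into one kernel-verified Lean document; each statement's English description precedes it below -/
import Mathlib

section
/- Let ω be a radial weight with \hat{ω}(r)>0 for all r<1. If there exist C>0 and β>0 such that \hat{ω}(r) ≤ C·((1-r)/(1-t))^β·\hat{ω}(t) for all 0 ≤ r ≤ t < 1, then there exists C'>0 such that the moments ω_n = ∫_0^1 r^n ω(r) dr satisfy ω_n ≤ C'·ω_{2n} for all n. -/
/-!
Cut `(0, 1]` at the dyadic points `1 - 2⁻ᵏ` up to `t = 1 - 1/(4n)`. On the `k`-th piece
`rⁿ ≤ exp (-n 2⁻ᵏ⁻¹)`, while the hypothesis bounds `ω̂(1 - 2⁻ᵏ)` by `C (4n 2⁻ᵏ)^β ω̂(t)`.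
Since `y^(β+1) e^(-y)` is bounded, the `k`-th piece contributes `O(2ᵏ/n) ω̂(t)`, and these
contributions sum to `O(ω̂(t))`. Conversely `ω_{2n} ≥ t^(2n) ω̂(t) ≥ ω̂(t)/2`.
-/

open MeasureTheory Set Real Finset

lemma rpow_mul_exp_neg_le_rpow_self {s y : ℝ} (hs : 0 < s) (hy : 0 < y) :
    y ^ s * exp (-y) ≤ s ^ s := by
  have hlog : s * log (y / s) ≤ y - s := by
    calc s * log (y / s) ≤ s * (y / s - 1) :=
          mul_le_mul_of_nonneg_left (log_le_sub_one_of_pos (div_pos hy hs)) hs.le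
      _ = y - s := by field_simp
  rw [log_div hy.ne' hs.ne'] at hlog
  rw [rpow_def_of_pos hy, rpow_def_of_pos hs, ← exp_add, exp_le_exp]
  nlinarith

lemma exp_neg_mul_rpow_le_div {β y : ℝ} (hβ : -1 < β) (hy : 0 < y) :
    exp (-y) * y ^ β ≤ (β + 1) ^ (β + 1) / y := by
  rw [le_div_iff₀ hy]
  calc exp (-y) * y ^ β * y = y ^ (β + 1) * exp (-y) := by rw [rpow_add_one hy.ne']; ring
    _ ≤ (β + 1) ^ (β + 1) := rpow_mul_exp_neg_le_rpow_self (by linarith) hy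

lemma one_sub_half_pow_pow_mul_rpow_le {β : ℝ} (hβ : 0 ≤ β) {n : ℕ} (hn : 0 < n) (k : ℕ) :
    (1 - (1 / 2 : ℝ) ^ (k + 1)) ^ n * ((1 / 2 : ℝ) ^ k * (4 * n)) ^ β ≤
      8 ^ β * (β + 1) ^ (β + 1) * (2 ^ (k + 1) / n) := by
  set y : ℝ := n * (1 / 2) ^ (k + 1)
  have hy : 0 < y := by positivity
  have hexp : (1 - (1 / 2 : ℝ) ^ (k + 1)) ^ n ≤ exp (-y) := by
    calc (1 - (1 / 2 : ℝ) ^ (k + 1)) ^ n ≤ exp (-(1 / 2 : ℝ) ^ (k + 1)) ^ n :=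
          pow_le_pow_left₀ (sub_nonneg.2 (pow_le_one₀ (by norm_num) (by norm_num)))
            (one_sub_le_exp_neg _) n
      _ = exp (-y) := by rw [← exp_nat_mul]; simp only [y]; ring_nf
  have hratio : (1 / 2 : ℝ) ^ k * (4 * n) = 8 * y := by simp only [y]; ring
  rw [hratio, mul_rpow (by norm_num) hy.le]
  calc _ ≤ exp (-y) * (8 ^ β * y ^ β) := by gcongr
    _ = 8 ^ β * (exp (-y) * y ^ β) := by ring
    _ ≤ 8 ^ β * ((β + 1) ^ (β + 1) / y) := by
        gcongr
        exact exp_neg_mul_rpow_le_div (by linarith) hy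
    _ = 8 ^ β * (β + 1) ^ (β + 1) * (2 ^ (k + 1) / n) := by
        simp only [y]; field_simp; rw [← mul_pow]; norm_num

lemma exists_two_pow_between {n : ℕ} (hn : 0 < n) : ∃ K : ℕ, 4 * n ≤ 2 ^ K ∧ 2 ^ K ≤ 8 * n := by
  have hlow := Nat.pow_log_le_self 2 hn.ne'
  have hhigh : n < 2 ^ Nat.log 2 n * 2 := by
    simpa [pow_succ] using Nat.lt_pow_succ_log_self one_lt_two n
  refine ⟨Nat.log 2 n + 3, ?_, ?_⟩ <;> rw [pow_add] <;> omega

lemma one_sub_half_pow_le_one_sub_div {n k : ℕ} (h : 2 ^ k ≤ 4 * n) :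
    1 - (1 / 2 : ℝ) ^ k ≤ 1 - 1 / (4 * n) := by
  rw [one_div_pow]
  gcongr
  exact_mod_cast h

lemma one_sub_div_le_one_sub_half_pow {n K : ℕ} (hn : 0 < n) (h : 4 * n ≤ 2 ^ K) :
    1 - 1 / (4 * n : ℝ) ≤ 1 - (1 / 2) ^ K := by
  rw [one_div_pow]
  gcongr
  exact_mod_cast h

lemma sum_two_pow_succ_div_le {K n : ℕ} (hK : 2 ^ K ≤ 8 * n) :
    ∑ k ∈ range K, (2 : ℝ) ^ (k + 1) / n ≤ 16 := by
  have hK' : (2 : ℝ) ^ K ≤ 8 * n := by exact_mod_cast hK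
  have hn : (0 : ℝ) < n := by linarith [one_le_pow₀ (M₀ := ℝ) one_le_two (n := K)]
  have hgeom : ∑ k ∈ range K, (2 : ℝ) ^ (k + 1) = 2 * (2 ^ K - 1) := by
    rw [← geom_sum_mul (2 : ℝ) K]
    simp_rw [pow_succ, ← sum_mul]
    ring
  rw [← sum_div, hgeom, div_le_iff₀ hn]
  linarith

lemma one_half_le_one_sub_pow {n : ℕ} (hn : 0 < n) : 1 / 2 ≤ (1 - 1 / (4 * n : ℝ)) ^ (2 * n) := by
  have hn' : (n : ℝ) ≠ 0 := by exact_mod_cast hn.ne'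
  have hbernoulli := one_add_mul_le_pow (a := -(1 / (4 * n : ℝ))) ?_ (2 * n)
  · have hval : 1 + ((2 * n : ℕ) : ℝ) * -(1 / (4 * n)) = 1 / 2 := by push_cast; field_simp; ring
    rwa [hval, ← sub_eq_add_neg] at hbernoulli
  · have : (1 : ℝ) ≤ n := by exact_mod_cast hn
    rw [neg_le_neg_iff, div_le_iff₀ (by positivity)]
    linarith

lemma setIntegral_Ioc_eq_sum_add {f : ℝ → ℝ} {a : ℕ → ℝ} (ha : Monotone a) {b : ℝ} {K : ℕ}
    (hK : a K ≤ b) (hf : IntegrableOn f (Ioc (a 0) b)) :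
    ∫ x in Ioc (a 0) b, f x =
      (∑ k ∈ range K, ∫ x in Ioc (a k) (a (k + 1)), f x) + ∫ x in Ioc (a K) b, f x := by
  have hii : ∀ {c d}, a 0 ≤ c → c ≤ d → d ≤ b → IntervalIntegrable f volume c d :=
    fun hc hcd hd =>
      (intervalIntegrable_iff_integrableOn_Ioc_of_le hcd).2 (hf.mono_set (Ioc_subset_Ioc hc hd))
  have hK0 : a 0 ≤ a K := ha (Nat.zero_le K)
  rw [← intervalIntegral.integral_of_le (hK0.trans hK),
    ← intervalIntegral.integral_add_adjacent_intervals (hii le_rfl hK0 hK) (hii hK0 hK le_rfl),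
    ← intervalIntegral.sum_integral_adjacent_intervals
      fun k (hk : k < K) => hii (ha (Nat.zero_le k)) (ha k.le_succ) ((ha hk).trans hK),
    intervalIntegral.integral_of_le hK]
  congr 1
  exact sum_congr rfl fun k _ => intervalIntegral.integral_of_le (ha (Nat.le_succ k))

noncomputable section

namespace RadialWeight

/-- `ω̂(r)` -/
def tail (ω : ℝ → ℝ) (r : ℝ) : ℝ := ∫ s in Ioc r 1, ω s

/-- `ω_n` -/
def moment (ω : ℝ → ℝ) (n : ℕ) : ℝ := ∫ r in Ioc (0 : ℝ) 1, r ^ n * ω r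

def TailDoubling (ω : ℝ → ℝ) (C β : ℝ) : Prop :=
  ∀ r t : ℝ, 0 ≤ r → r ≤ t → t < 1 → tail ω r ≤ C * ((1 - r) / (1 - t)) ^ β * tail ω t

variable {ω : ℝ → ℝ}

lemma integrableOn_pow_mul (hint : IntegrableOn ω (Ioc 0 1)) (n : ℕ) :
    IntegrableOn (fun r => r ^ n * ω r) (Ioc 0 1) := by
  rw [← integrableOn_Icc_iff_integrableOn_Ioc] at hint ⊢
  exact hint.continuousOn_mul (continuous_pow n).continuousOn isCompact_Icc

lemma pow_mul_nonneg_ae (hω : 0 ≤ᵐ[volume.restrict (Ioc 0 1)] ω) (n : ℕ) :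
    0 ≤ᵐ[volume.restrict (Ioc 0 1)] fun r => r ^ n * ω r := by
  filter_upwards [hω, ae_restrict_mem measurableSet_Ioc] with r hr hmem
  exact mul_nonneg (pow_nonneg hmem.1.le n) hr

lemma moment_nonneg (hω : 0 ≤ᵐ[volume.restrict (Ioc 0 1)] ω) (n : ℕ) : 0 ≤ moment ω n :=
  setIntegral_nonneg_of_ae_restrict (pow_mul_nonneg_ae hω n)

lemma tail_nonneg (hω : 0 ≤ᵐ[volume.restrict (Ioc 0 1)] ω) {a : ℝ} (ha : 0 ≤ a) :
    0 ≤ tail ω a :=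
  setIntegral_nonneg_of_ae_restrict
    (ae_restrict_of_ae_restrict_of_subset (Ioc_subset_Ioc_left ha) hω)

lemma setIntegral_le_tail (hω : 0 ≤ᵐ[volume.restrict (Ioc 0 1)] ω)
    (hint : IntegrableOn ω (Ioc 0 1)) {a : ℝ} (ha : 0 ≤ a) {s : Set ℝ} (hs : s ⊆ Ioc a 1) :
    ∫ x in s, ω x ≤ tail ω a :=
  setIntegral_mono_set (hint.mono_set (Ioc_subset_Ioc_left ha))
    (ae_restrict_of_ae_restrict_of_subset (Ioc_subset_Ioc_left ha) hω) hs.eventuallyLE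

lemma setIntegral_pow_mul_le (hω : 0 ≤ᵐ[volume.restrict (Ioc 0 1)] ω)
    (hint : IntegrableOn ω (Ioc 0 1)) {a b : ℝ} (ha : 0 ≤ a) (hb : b ≤ 1) (n : ℕ) :
    ∫ x in Ioc a b, x ^ n * ω x ≤ b ^ n * ∫ x in Ioc a b, ω x := by
  have hsub : Ioc a b ⊆ Ioc 0 1 := Ioc_subset_Ioc ha hb
  rw [← integral_const_mul]
  refine setIntegral_mono_ae_restrict ((integrableOn_pow_mul hint n).mono_set hsub)
    ((hint.mono_set hsub).const_mul _) ?_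
  filter_upwards [ae_restrict_of_ae_restrict_of_subset hsub hω,
    ae_restrict_mem measurableSet_Ioc] with x hx hmem
  exact mul_le_mul_of_nonneg_right (pow_le_pow_left₀ (ha.trans hmem.1.le) hmem.2 n) hx

lemma pow_mul_tail_le_moment (hω : 0 ≤ᵐ[volume.restrict (Ioc 0 1)] ω)
    (hint : IntegrableOn ω (Ioc 0 1)) {a : ℝ} (ha : 0 ≤ a) (n : ℕ) :
    a ^ n * tail ω a ≤ moment ω n := by
  have hsub : Ioc a 1 ⊆ Ioc 0 1 := Ioc_subset_Ioc_left ha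
  calc a ^ n * tail ω a = ∫ x in Ioc a 1, a ^ n * ω x := (integral_const_mul _ _).symm
    _ ≤ ∫ x in Ioc a 1, x ^ n * ω x := by
        refine setIntegral_mono_ae_restrict ((hint.mono_set hsub).const_mul _)
          ((integrableOn_pow_mul hint n).mono_set hsub) ?_
        filter_upwards [ae_restrict_of_ae_restrict_of_subset hsub hω,
          ae_restrict_mem measurableSet_Ioc] with x hx hmem
        exact mul_le_mul_of_nonneg_right (pow_le_pow_left₀ ha hmem.1.le n) hx
    _ ≤ moment ω n :=
        setIntegral_mono_set (integrableOn_pow_mul hint n) (pow_mul_nonneg_ae hω n)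
          hsub.eventuallyLE

lemma setIntegral_pow_mul_le_of_tailDoubling (hω : 0 ≤ᵐ[volume.restrict (Ioc 0 1)] ω)
    (hint : IntegrableOn ω (Ioc 0 1)) {C β : ℝ} (hdbl : TailDoubling ω C β) {r b t : ℝ}
    (hr : 0 ≤ r) (hb : 0 ≤ b) (hb1 : b ≤ 1) (hrt : r ≤ t) (ht : t < 1) (n : ℕ) :
    ∫ x in Ioc r b, x ^ n * ω x ≤ b ^ n * ((1 - r) / (1 - t)) ^ β * (C * tail ω t) :=
  calc ∫ x in Ioc r b, x ^ n * ω x ≤ b ^ n * ∫ x in Ioc r b, ω x :=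
        setIntegral_pow_mul_le hω hint hr hb1 n
    _ ≤ b ^ n * (C * ((1 - r) / (1 - t)) ^ β * tail ω t) := by
        gcongr
        exact (setIntegral_le_tail hω hint hr (Ioc_subset_Ioc_right hb1)).trans
          (hdbl r t hr hrt ht)
    _ = b ^ n * ((1 - r) / (1 - t)) ^ β * (C * tail ω t) := by ring

lemma moment_le_mul_tail (hω : 0 ≤ᵐ[volume.restrict (Ioc 0 1)] ω)
    (hint : IntegrableOn ω (Ioc 0 1)) {C β : ℝ} (hC : 0 ≤ C) (hβ : 0 ≤ β)
    (hdbl : TailDoubling ω C β) {n : ℕ} (hn : 0 < n) :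
    moment ω n ≤ (1 + 16 * C * (8 ^ β * (β + 1) ^ (β + 1))) * tail ω (1 - 1 / (4 * n)) := by
  set B : ℝ := 8 ^ β * (β + 1) ^ (β + 1)
  set t : ℝ := 1 - 1 / (4 * n)
  set a : ℕ → ℝ := fun k => 1 - (1 / 2) ^ k
  obtain ⟨K, hK4, hK8⟩ := exists_two_pow_between hn
  have ha : Monotone a := fun i j hij =>
    sub_le_sub_left (pow_le_pow_of_le_one (by norm_num) (by norm_num) hij) 1
  have ha0 : ∀ k, 0 ≤ a k := fun k => sub_nonneg.2 (pow_le_one₀ (by norm_num) (by norm_num))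
  have ha1 : ∀ k, a k ≤ 1 := fun k => sub_le_self 1 (by positivity)
  have hat : ∀ k < K, a k ≤ t := fun k hk => by
    refine one_sub_half_pow_le_one_sub_div ?_
    have := (Nat.pow_le_pow_right two_pos hk).trans hK8
    rw [pow_succ] at this
    omega
  have htK : t ≤ a K := one_sub_div_le_one_sub_half_pow hn hK4
  have ht0 : 0 ≤ t := (ha0 0).trans (hat 0 (Nat.pos_of_ne_zero (by rintro rfl; omega)))
  have ht1 : t < 1 := sub_lt_self 1 (by positivity)
  have htail : 0 ≤ C * tail ω t := mul_nonneg hC (tail_nonneg hω ht0)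
  have hpiece : ∀ k ∈ range K, ∫ x in Ioc (a k) (a (k + 1)), x ^ n * ω x ≤
      B * (2 ^ (k + 1) / n) * (C * tail ω t) := fun k hk => by
    have hratio : (1 - a k) / (1 - t) = (1 / 2) ^ k * (4 * n) := by
      simp only [a, t]; field_simp; ring
    refine (setIntegral_pow_mul_le_of_tailDoubling hω hint hdbl (ha0 k) (ha0 _) (ha1 _)
      (hat k (mem_range.1 hk)) ht1 n).trans ?_
    rw [hratio]
    exact mul_le_mul_of_nonneg_right (one_sub_half_pow_pow_mul_rpow_le hβ hn k) htail
  have hlast : ∫ x in Ioc (a K) 1, x ^ n * ω x ≤ tail ω t := by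
    refine (setIntegral_pow_mul_le hω hint (ha0 K) le_rfl n).trans ?_
    rw [one_pow, one_mul]
    exact setIntegral_le_tail hω hint ht0 (Ioc_subset_Ioc_left htK)
  have hsplit := setIntegral_Ioc_eq_sum_add ha (ha1 K)
    (by simpa [a] using integrableOn_pow_mul hint n)
  simp only [a, pow_zero, sub_self] at hsplit
  calc moment ω n
      = (∑ k ∈ range K, ∫ x in Ioc (a k) (a (k + 1)), x ^ n * ω x) +
          ∫ x in Ioc (a K) 1, x ^ n * ω x := hsplit
    _ ≤ (∑ k ∈ range K, B * (2 ^ (k + 1) / n) * (C * tail ω t)) + tail ω t :=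
        add_le_add (sum_le_sum hpiece) hlast
    _ = B * (∑ k ∈ range K, (2 : ℝ) ^ (k + 1) / n) * (C * tail ω t) + tail ω t := by
        rw [← sum_mul, ← mul_sum]
    _ ≤ B * 16 * (C * tail ω t) + tail ω t := by gcongr; exact sum_two_pow_succ_div_le hK8
    _ = (1 + 16 * C * B) * tail ω t := by ring

lemma tail_le_two_mul_moment (hω : 0 ≤ᵐ[volume.restrict (Ioc 0 1)] ω)
    (hint : IntegrableOn ω (Ioc 0 1)) {n : ℕ} (hn : 0 < n) :
    tail ω (1 - 1 / (4 * n)) ≤ 2 * moment ω (2 * n) := by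
  have ht0 : (0 : ℝ) ≤ 1 - 1 / (4 * n) := by
    have : (1 : ℝ) ≤ n := by exact_mod_cast hn
    rw [sub_nonneg, div_le_one (by positivity)]
    linarith
  have := pow_mul_tail_le_moment hω hint ht0 (2 * n)
  nlinarith [one_half_le_one_sub_pow hn, tail_nonneg hω ht0]

end RadialWeight

end

open RadialWeight

theorem stmt_1_general (ω : ℝ → ℝ)
    (hnn : ∀ r ∈ Set.Ico (0:ℝ) 1, 0 ≤ ω r)
    (hint : MeasureTheory.IntegrableOn ω (Set.Ioc (0:ℝ) 1))
    (h : ∃ C > (0:ℝ), ∃ β > (0:ℝ), ∀ r t : ℝ, 0 ≤ r → r ≤ t → t < 1 →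
      (∫ s in Set.Ioc r 1, ω s) ≤
        C * ((1 - r) / (1 - t)) ^ β * ∫ s in Set.Ioc t 1, ω s) :
    ∃ C' > (0:ℝ), ∀ n : ℕ,
      (∫ r in Set.Ioc (0:ℝ) 1, r ^ n * ω r) ≤
        C' * ∫ r in Set.Ioc (0:ℝ) 1, r ^ (2 * n) * ω r := by
  obtain ⟨C, hC, β, hβ, hdbl⟩ := h
  have hω : 0 ≤ᵐ[volume.restrict (Ioc 0 1)] ω := by
    rw [← Measure.restrict_congr_set Ioo_ae_eq_Ioc]
    exact ae_restrict_of_forall_mem measurableSet_Ioo fun r hr => hnn r (Ioo_subset_Ico_self hr)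
  set A : ℝ := 1 + 16 * C * (8 ^ β * (β + 1) ^ (β + 1))
  have hA : 1 ≤ A := le_add_of_nonneg_right (by positivity)
  refine ⟨2 * A, by positivity, fun n => ?_⟩
  change moment ω n ≤ 2 * A * moment ω (2 * n)
  rcases Nat.eq_zero_or_pos n with rfl | hn
  · simpa using le_mul_of_one_le_left (moment_nonneg hω 0) (by linarith)
  calc moment ω n ≤ A * tail ω (1 - 1 / (4 * n)) := moment_le_mul_tail hω hint hC.le hβ.le hdbl hn
    _ ≤ A * (2 * moment ω (2 * n)) := by gcongr; exact tail_le_two_mul_moment hω hint hn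
    _ = 2 * A * moment ω (2 * n) := by ring

/-- If `ω̂(r) ≤ C ((1-r)/(1-t))^β ω̂(t)` for `0 ≤ r ≤ t < 1`, then the moments
`ω_n = ∫_0^1 r^n ω(r) dr` satisfy `ω_n ≤ C' ω_{2n}`. -/
theorem stmt_1 (ω : ℝ → ℝ)
    (hnn : ∀ r ∈ Set.Ico (0:ℝ) 1, 0 ≤ ω r)
    (hint : MeasureTheory.IntegrableOn ω (Set.Ioc (0:ℝ) 1))
    (hpos : ∀ r ∈ Set.Ico (0:ℝ) 1, 0 < ∫ s in Set.Ioc r 1, ω s)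
    (h : ∃ C > (0:ℝ), ∃ β > (0:ℝ), ∀ r t : ℝ, 0 ≤ r → r ≤ t → t < 1 →
      (∫ s in Set.Ioc r 1, ω s) ≤
        C * ((1 - r) / (1 - t)) ^ β * ∫ s in Set.Ioc t 1, ω s) :
    ∃ C' > (0:ℝ), ∀ n : ℕ,
      (∫ r in Set.Ioc (0:ℝ) 1, r ^ n * ω r) ≤
        C' * ∫ r in Set.Ioc (0:ℝ) 1, r ^ (2 * n) * ω r :=
  stmt_1_general ω hnn hint h
end

section
/- Let ω ∈ \hat{𝒟} be a radial weight and define ω⋆(z) = ∫_{|z|}^1 ω(s)·log(s/|z|)·s ds for z ≠ 0. Then ω⋆(z) ≍ \hat{ω}(|z|)·(1-|z|) as |z| → 1⁻; i.e., there exist constants c, C > 0 and r₀ ∈ (0,1) such that c·\hat{ω}(|z|)(1-|z|) ≤ ω⋆(z) ≤ C·\hat{ω}(|z|)(1-|z|) for all r₀ ≤ |z| < 1. -/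
open MeasureTheory Set

/-- For `ω ∈ 𝒟̂`, `ω⋆(z) = ∫_{|z|}^1 ω(s) log(s/|z|) s ds ≍ ω̂(|z|)(1-|z|)` as `|z| → 1⁻`. -/
theorem stmt_3 (ω : ℝ → ℝ)
    (hnn : ∀ r ∈ Set.Ico (0:ℝ) 1, 0 ≤ ω r)
    (hint : MeasureTheory.IntegrableOn ω (Set.Ioc (0:ℝ) 1))
    (hpos : ∀ r ∈ Set.Ico (0:ℝ) 1, 0 < ∫ s in Set.Ioc r 1, ω s)
    (hD : ∃ C : ℝ, 1 ≤ C ∧ ∀ r ∈ Set.Ico (0:ℝ) 1,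
      (∫ s in Set.Ioc r 1, ω s) ≤ C * ∫ s in Set.Ioc ((1 + r) / 2) 1, ω s) :
    ∃ c > (0:ℝ), ∃ C > (0:ℝ), ∃ r₀ : ℝ, 0 < r₀ ∧ r₀ < 1 ∧
      ∀ z : ℂ, r₀ ≤ ‖z‖ → ‖z‖ < 1 →
        c * ((∫ s in Set.Ioc ‖z‖ 1, ω s) * (1 - ‖z‖)) ≤
            (∫ s in Set.Ioc ‖z‖ 1, ω s * Real.log (s / ‖z‖) * s) ∧
          (∫ s in Set.Ioc ‖z‖ 1, ω s * Real.log (s / ‖z‖) * s) ≤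
            C * ((∫ s in Set.Ioc ‖z‖ 1, ω s) * (1 - ‖z‖)) := by
  obtain ⟨C₀, hC₀1, hC₀⟩ := hD
  have hC₀pos : (0:ℝ) < C₀ := lt_of_lt_of_le one_pos hC₀1
  refine ⟨1/(2*C₀), by positivity, 2, by norm_num, 1/2, by norm_num, by norm_num, ?_⟩
  intro z hr hr1
  set r := ‖z‖ with hrdef
  have hr0 : (0:ℝ) < r := lt_of_lt_of_le (by norm_num) hr
  have hr2 : (1:ℝ)/2 ≤ r := hr
  set a := (1 + r)/2 with ha
  have har : r < a := by rw [ha]; linarith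
  have ha1 : a ≤ 1 := by rw [ha]; linarith
  have hsub : Ioc a 1 ⊆ Ioc r 1 := Ioc_subset_Ioc_left har.le
  have hωr : IntegrableOn ω (Ioc r 1) := hint.mono_set (Ioc_subset_Ioc_left hr0.le)
  have h₁ : ∀ᵐ s : ℝ ∂volume, s ≠ (1:ℝ) := by
    rw [ae_iff]
    have : {x : ℝ | ¬ x ≠ 1} = {(1:ℝ)} := by ext x; simp
    rw [this]
    exact Real.volume_singleton
  have hgmeas : Measurable fun s : ℝ => Real.log (s / r) * s :=
    (Real.measurable_log.comp (measurable_id.div_const r)).mul measurable_id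
  have hfint : IntegrableOn (fun s => ω s * Real.log (s / r) * s) (Ioc r 1) := by
    have hb : ∀ᵐ s ∂(volume.restrict (Ioc r 1)), ‖Real.log (s / r) * s‖ ≤ 1 := by
      filter_upwards [ae_restrict_mem measurableSet_Ioc] with s hs
      have hs0 : 0 < s := lt_trans hr0 hs.1
      have hlog0 : 0 ≤ Real.log (s/r) :=
        Real.log_nonneg (by rw [le_div_iff₀ hr0]; linarith [hs.1])
      have hlog1 : Real.log (s/r) ≤ s/r - 1 := Real.log_le_sub_one_of_pos (by positivity)
      have h2 : s/r - 1 ≤ 1 := by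
        rw [div_sub_one hr0.ne', div_le_one hr0]; linarith [hs.2]
      rw [Real.norm_eq_abs, abs_of_nonneg (by positivity)]
      nlinarith [hs.2]
    have h := hωr.bdd_mul (c := 1) hgmeas.aestronglyMeasurable hb
    exact h.congr (ae_of_all _ fun s => by ring)
  have hωhat_nn : 0 ≤ ∫ s in Ioc r 1, ω s := (hpos r ⟨by linarith, hr1⟩).le
  constructor
  · -- lower bound
    have hnn_f : 0 ≤ᵐ[volume.restrict (Ioc r 1)] fun s => ω s * Real.log (s / r) * s := by
      filter_upwards [ae_restrict_mem measurableSet_Ioc, ae_restrict_of_ae h₁] with s hs hs1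
      have hs0 : 0 < s := lt_trans hr0 hs.1
      have hωs : 0 ≤ ω s := hnn s ⟨hs0.le, lt_of_le_of_ne hs.2 hs1⟩
      have hlog0 : 0 ≤ Real.log (s/r) :=
        Real.log_nonneg (by rw [le_div_iff₀ hr0]; linarith [hs.1])
      positivity
    have hmono : (∫ s in Ioc a 1, ω s * Real.log (s / r) * s)
        ≤ ∫ s in Ioc r 1, ω s * Real.log (s / r) * s :=
      setIntegral_mono_set hfint hnn_f (HasSubset.Subset.eventuallyLE hsub)
    have hlb : (∫ s in Ioc a 1, ω s * ((1-r)/2))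
        ≤ ∫ s in Ioc a 1, ω s * Real.log (s / r) * s := by
      apply integral_mono_ae ((hωr.mono_set hsub).mul_const _) (hfint.mono_set hsub)
      filter_upwards [ae_restrict_mem measurableSet_Ioc, ae_restrict_of_ae h₁] with s hs hs1
      have has : a < s := hs.1
      have hs0 : 0 < s := by rw [ha] at has; linarith
      have hωs : 0 ≤ ω s := hnn s ⟨hs0.le, lt_of_le_of_ne hs.2 hs1⟩
      have hlog : 1 - r/s ≤ Real.log (s/r) := by
        have h1 := Real.log_le_sub_one_of_pos (x := r/s) (by positivity)
        have h2 : Real.log (r/s) = - Real.log (s/r) := by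
          rw [← Real.log_inv]; congr 1; field_simp
        rw [h2] at h1; linarith
      have h3 : (1 - r/s) * s ≤ Real.log (s/r) * s :=
        mul_le_mul_of_nonneg_right hlog hs0.le
      have h4 : (1 - r/s) * s = s - r := by field_simp
      have key : (1-r)/2 ≤ Real.log (s/r) * s := by
        rw [ha] at has; rw [h4] at h3; linarith
      nlinarith
    rw [integral_mul_const] at hlb
    have hDineq : (∫ s in Ioc r 1, ω s) ≤ C₀ * ∫ s in Ioc a 1, ω s :=
      hC₀ r ⟨by linarith, hr1⟩
    have h1r : (0:ℝ) < 1 - r := by linarith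
    have hstep : 1/(2*C₀) * ((∫ s in Ioc r 1, ω s) * (1 - r))
        ≤ (∫ s in Ioc a 1, ω s) * ((1-r)/2) := by
      rw [div_mul_eq_mul_div, div_le_iff₀ (by positivity : (0:ℝ) < 2*C₀)]
      nlinarith [mul_le_mul_of_nonneg_right hDineq h1r.le]
    linarith
  · -- upper bound
    have hub : (∫ s in Ioc r 1, ω s * Real.log (s / r) * s)
        ≤ ∫ s in Ioc r 1, ω s * (2*(1-r)) := by
      apply integral_mono_ae hfint (hωr.mul_const _)
      filter_upwards [ae_restrict_mem measurableSet_Ioc, ae_restrict_of_ae h₁] with s hs hs1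
      have hs0 : 0 < s := lt_trans hr0 hs.1
      have hωs : 0 ≤ ω s := hnn s ⟨hs0.le, lt_of_le_of_ne hs.2 hs1⟩
      have hlog0 : 0 ≤ Real.log (s/r) :=
        Real.log_nonneg (by rw [le_div_iff₀ hr0]; linarith [hs.1])
      have hlog1 : Real.log (s/r) ≤ s/r - 1 := Real.log_le_sub_one_of_pos (by positivity)
      have h2 : s/r - 1 ≤ 2*(1-r) := by
        rw [div_sub_one hr0.ne', div_le_iff₀ hr0]; nlinarith [hs.2]
      have key : Real.log (s/r) * s ≤ 2*(1-r) := by nlinarith [hs.2]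
      nlinarith
    rw [integral_mul_const] at hub
    nlinarith [hub]
end

section
/- Let ω be a radial weight with \hat{ω}(r)>0 for all r<1. Then the following are equivalent: (i) there exist K>1 and C>1 such that \hat{ω}(r) ≥ C·\hat{ω}(1-(1-r)/K) for all 0 ≤ r < 1; (ii) there exist C>0 and β>0 such that \hat{ω}(t) ≤ C·((1-t)/(1-r))^β·\hat{ω}(r) for all 0 ≤ r ≤ t < 1. -/
open MeasureTheory Set

/-- For a radial weight `ω` with positive tail integrals, the reverse doubling
condition `ω̂(r) ≥ C ω̂(1-(1-r)/K)` is equivalent to the power-type estimate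
`ω̂(t) ≤ C ((1-t)/(1-r))^β ω̂(r)` for `0 ≤ r ≤ t < 1`. -/
theorem stmt_4 (ω : ℝ → ℝ)
    (hnn : ∀ r ∈ Set.Ico (0:ℝ) 1, 0 ≤ ω r)
    (hint : MeasureTheory.IntegrableOn ω (Set.Ioc (0:ℝ) 1))
    (hpos : ∀ r ∈ Set.Ico (0:ℝ) 1, 0 < ∫ s in Set.Ioc r 1, ω s) :
    (∃ K : ℝ, 1 < K ∧ ∃ C : ℝ, 1 < C ∧ ∀ r : ℝ, 0 ≤ r → r < 1 →
        C * (∫ s in Set.Ioc (1 - (1 - r) / K) 1, ω s) ≤ ∫ s in Set.Ioc r 1, ω s) ↔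
      (∃ C > (0:ℝ), ∃ β > (0:ℝ), ∀ r t : ℝ, 0 ≤ r → r ≤ t → t < 1 →
        (∫ s in Set.Ioc t 1, ω s) ≤
          C * ((1 - t) / (1 - r)) ^ β * ∫ s in Set.Ioc r 1, ω s) := by
  have mono : ∀ r t : ℝ, 0 ≤ r → r ≤ t →
      (∫ s in Set.Ioc t 1, ω s) ≤ ∫ s in Set.Ioc r 1, ω s := by
    intro r t hr hrt
    rw [MeasureTheory.integral_Ioc_eq_integral_Ioo, MeasureTheory.integral_Ioc_eq_integral_Ioo]
    apply MeasureTheory.setIntegral_mono_set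
    · exact hint.mono_set (fun x hx => ⟨lt_of_le_of_lt hr hx.1, hx.2.le⟩)
    · exact (MeasureTheory.ae_restrict_iff' measurableSet_Ioo).2
        (MeasureTheory.ae_of_all _ (fun s hs => hnn s ⟨le_trans hr hs.1.le, hs.2⟩))
    · exact HasSubset.Subset.eventuallyLE (Set.Ioo_subset_Ioo_left hrt)
  constructor
  · -- (i) → (ii)
    rintro ⟨K, hK, C, hC, h⟩
    have hK0 : (0:ℝ) < K := lt_trans one_pos hK
    have hC0 : (0:ℝ) < C := lt_trans one_pos hC
    -- iteration lemma
    have iter : ∀ n : ℕ, ∀ r : ℝ, 0 ≤ r → r < 1 →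
        C ^ n * (∫ s in Set.Ioc (1 - (1 - r) / K ^ n) 1, ω s) ≤ ∫ s in Set.Ioc r 1, ω s := by
      intro n
      induction n with
      | zero => intro r hr hr1; simp
      | succ n ih =>
        intro r hr hr1
        have h1r : 0 < 1 - r := by linarith
        set r' := 1 - (1 - r) / K with hr'def
        have hdiv : (1 - r) / K ≤ 1 - r := by
          rw [div_le_iff₀ hK0]; nlinarith
        have hrr' : r ≤ r' := by simp only [hr'def]; linarith
        have hr'1 : r' < 1 := by
          have : 0 < (1 - r) / K := div_pos h1r hK0
          simp only [hr'def]; linarith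
        have key : 1 - (1 - r) / K ^ (n + 1) = 1 - (1 - r') / K ^ n := by
          have h1 : 1 - r' = (1 - r) / K := by simp [hr'def]
          rw [h1]
          rw [div_div, pow_succ, mul_comm]
        rw [key, pow_succ]
        calc C ^ n * C * (∫ s in Set.Ioc (1 - (1 - r') / K ^ n) 1, ω s)
            = C * (C ^ n * (∫ s in Set.Ioc (1 - (1 - r') / K ^ n) 1, ω s)) := by ring
          _ ≤ C * (∫ s in Set.Ioc r' 1, ω s) :=
              mul_le_mul_of_nonneg_left (ih r' (le_trans hr hrr') hr'1) hC0.le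
          _ ≤ ∫ s in Set.Ioc r 1, ω s := h r hr hr1
    refine ⟨C, hC0, Real.logb K C, Real.logb_pos hK hC, ?_⟩
    intro r t hr hrt ht
    have h1t : 0 < 1 - t := by linarith
    have h1r : 0 < 1 - r := by linarith
    have hr1 : r < 1 := lt_of_le_of_lt hrt ht
    set β := Real.logb K C with hβdef
    have hβ : 0 < β := Real.logb_pos hK hC
    set x := (1 - r) / (1 - t) with hxdef
    have hx1 : (1:ℝ) ≤ x := by
      rw [hxdef, le_div_iff₀ h1t]; linarith
    have hx0 : (0:ℝ) < x := lt_of_lt_of_le one_pos hx1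
    set n := ⌊Real.logb K x⌋₊ with hndef
    have hlogb : 0 ≤ Real.logb K x := Real.logb_nonneg hK hx1
    have hKn : (K:ℝ) ^ n ≤ x := by
      have h1 : (n : ℝ) ≤ Real.logb K x := Nat.floor_le hlogb
      have h2 : K ^ (n : ℝ) ≤ K ^ Real.logb K x :=
        Real.rpow_le_rpow_of_exponent_le hK.le h1
      rwa [Real.rpow_natCast, Real.rpow_logb hK0 (ne_of_gt hK) hx0] at h2
    have hKn1 : x < K ^ (n + 1) := by
      have h1 : Real.logb K x < (n + 1 : ℕ) := by
        exact_mod_cast Nat.lt_floor_add_one (Real.logb K x)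
      have h2 : K ^ Real.logb K x < K ^ ((n + 1 : ℕ) : ℝ) :=
        Real.rpow_lt_rpow_of_exponent_lt hK h1
      rwa [Real.rpow_natCast, Real.rpow_logb hK0 (ne_of_gt hK) hx0] at h2
    set t' := 1 - (1 - r) / K ^ n with ht'def
    have hKnpos : (0:ℝ) < K ^ n := pow_pos hK0 n
    have ht't : t' ≤ t := by
      have : 1 - t ≤ (1 - r) / K ^ n := by
        rw [le_div_iff₀ hKnpos]
        have := (le_div_iff₀ h1t).1 hKn
        nlinarith
      simp only [ht'def]; linarith
    have hrt' : r ≤ t' := by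
      have hdiv : (1 - r) / K ^ n ≤ 1 - r := by
        rw [div_le_iff₀ hKnpos]; nlinarith [one_le_pow₀ hK.le (n := n)]
      simp only [ht'def]; linarith
    have hΩt : 0 ≤ ∫ s in Set.Ioc t 1, ω s := (hpos t ⟨le_trans hr hrt, ht⟩).le
    -- chain: C^n * Ω t ≤ C^n * Ω t' ≤ Ω r
    have hchain : C ^ n * (∫ s in Set.Ioc t 1, ω s) ≤ ∫ s in Set.Ioc r 1, ω s := by
      calc C ^ n * (∫ s in Set.Ioc t 1, ω s)
          ≤ C ^ n * (∫ s in Set.Ioc t' 1, ω s) :=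
            mul_le_mul_of_nonneg_left (mono t' t (le_trans hr hrt') ht't) (pow_pos hC0 n).le
        _ ≤ ∫ s in Set.Ioc r 1, ω s := iter n r hr hr1
    -- x^β ≤ C^(n+1)
    have hKβ : (K:ℝ) ^ β = C := Real.rpow_logb hK0 (ne_of_gt hK) hC0
    have hxβ : x ^ β ≤ C ^ (n + 1) := by
      calc x ^ β ≤ (K ^ (n + 1)) ^ β :=
            Real.rpow_le_rpow hx0.le hKn1.le hβ.le
        _ = C ^ (n + 1) := by
            rw [← Real.rpow_natCast K (n + 1), ← Real.rpow_mul hK0.le, mul_comm,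
              Real.rpow_mul hK0.le, hKβ, Real.rpow_natCast]
    have hxβpos : 0 < x ^ β := Real.rpow_pos_of_pos hx0 β
    have hfrac : ((1 - t) / (1 - r)) ^ β = (x ^ β)⁻¹ := by
      rw [show (1 - t) / (1 - r) = x⁻¹ from (inv_div _ _).symm,
        ← Real.rpow_neg_one x, ← Real.rpow_mul hx0.le, neg_one_mul,
        Real.rpow_neg hx0.le]
    rw [hfrac, show C * (x ^ β)⁻¹ * (∫ s in Set.Ioc r 1, ω s)
        = (C * ∫ s in Set.Ioc r 1, ω s) / x ^ β by ring, le_div_iff₀ hxβpos]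
    calc (∫ s in Set.Ioc t 1, ω s) * x ^ β
        ≤ (∫ s in Set.Ioc t 1, ω s) * C ^ (n + 1) := mul_le_mul_of_nonneg_left hxβ hΩt
      _ = C * (C ^ n * ∫ s in Set.Ioc t 1, ω s) := by ring
      _ ≤ C * ∫ s in Set.Ioc r 1, ω s := mul_le_mul_of_nonneg_left hchain hC0.le
  · -- (ii) → (i)
    rintro ⟨C, hC0, β, hβ, h⟩
    set K := max ((2 * C) ^ (β⁻¹)) 2 with hKdef
    have hK1 : (1:ℝ) < K := lt_of_lt_of_le one_lt_two (le_max_right _ _)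
    have hK0 : (0:ℝ) < K := lt_trans one_pos hK1
    refine ⟨K, hK1, 2, one_lt_two, ?_⟩
    intro r hr hr1
    have h1r : 0 < 1 - r := by linarith
    set t := 1 - (1 - r) / K with htdef
    have hdiv : (1 - r) / K ≤ 1 - r := by
      rw [div_le_iff₀ hK0]; nlinarith
    have hrt : r ≤ t := by simp only [htdef]; linarith
    have ht1 : t < 1 := by
      have : 0 < (1 - r) / K := div_pos h1r hK0
      simp only [htdef]; linarith
    have hmain := h r t hr hrt ht1
    have hfrac : (1 - t) / (1 - r) = K⁻¹ := by
      simp only [htdef, sub_sub_cancel]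
      rw [div_right_comm, div_self (ne_of_gt h1r), one_div]
    have hKβ : 2 * C ≤ K ^ β := by
      calc 2 * C = ((2 * C) ^ (β⁻¹)) ^ β := (Real.rpow_inv_rpow (by positivity) (ne_of_gt hβ)).symm
        _ ≤ K ^ β := Real.rpow_le_rpow (by positivity) (le_max_left _ _) hβ.le
    have hKβpos : 0 < K ^ β := Real.rpow_pos_of_pos hK0 β
    have hhalf : C * (K⁻¹) ^ β ≤ 1 / 2 := by
      rw [Real.inv_rpow hK0.le, mul_comm, inv_mul_le_iff₀ hKβpos]
      nlinarith
    have hΩt : 0 ≤ ∫ s in Set.Ioc t 1, ω s := (hpos t ⟨le_trans hr hrt, ht1⟩).le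
    have hΩr : 0 ≤ ∫ s in Set.Ioc r 1, ω s := (hpos r ⟨hr, hr1⟩).le
    rw [hfrac] at hmain
    have : (∫ s in Set.Ioc t 1, ω s) ≤ 1 / 2 * ∫ s in Set.Ioc r 1, ω s := by
      calc (∫ s in Set.Ioc t 1, ω s) ≤ C * (K⁻¹) ^ β * ∫ s in Set.Ioc r 1, ω s := hmain
        _ ≤ 1 / 2 * ∫ s in Set.Ioc r 1, ω s := mul_le_mul_of_nonneg_right hhalf hΩr
    simp only [htdef] at this ⊢
    linarith
end

section
/- Let ω ∈ \hat{𝒟} and let T: A²_ω → A²_ω be a positive bounded linear operator. Then T is trace class if and only if ∫_𝔻 \tilde{T}(z)·‖B^ω_z‖²_{A²_ω}·ω(z) dA(z) < ∞, and in that case the trace of T equals ∫_𝔻 \tilde{T}(z)·‖B^ω_z‖²_{A²_ω}·ω(z) dA(z), where \tilde{T}(z)=⟨T(b^ω_z), b^ω_z⟩_{A²_ω} is the Berezin transform. -/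
open MeasureTheory
open scoped ComplexInnerProductSpace

/-!
Write `T = S²` with `S = √T` self-adjoint, so that `⟪x, T x⟫ = ‖S x‖²`. For `z ∈ 𝔻` the
reproducing property gives `⟪b n, S B_z⟫ = conj (S (b n))(z)`, hence by Parseval
`∑ₙ |S (b n)(z)|² = ‖S B_z‖² = T̃(z) ‖B_z‖²`. Integrating against `ω dA` and exchanging sum and
integral (monotone convergence) turns `∑ₙ ‖S (b n)‖² = ∑ₙ ⟪b n, T (b n)⟫` into the integral.
-/

section SeriesOfNonneg

variable {α ι : Type*} [MeasurableSpace α] [Countable ι] {μ : Measure α}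
  {f : ι → α → ℝ} {g : α → ℝ}

theorem lintegral_ofReal_eq_tsum_ofReal_integral (hf : ∀ i, Integrable (f i) μ)
    (hf0 : ∀ i, 0 ≤ᵐ[μ] f i) (hfg : ∀ᵐ x ∂μ, HasSum (fun i => f i x) (g x)) :
    ∫⁻ x, ENNReal.ofReal (g x) ∂μ = ∑' i, ENNReal.ofReal (∫ x, f i x ∂μ) := by
  calc ∫⁻ x, ENNReal.ofReal (g x) ∂μ = ∫⁻ x, ∑' i, ENNReal.ofReal (f i x) ∂μ := by
        refine lintegral_congr_ae ?_
        filter_upwards [hfg, ae_all_iff.2 hf0] with x hx hx0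
        rw [← hx.tsum_eq, ENNReal.ofReal_tsum_of_nonneg hx0 hx.summable]
    _ = ∑' i, ∫⁻ x, ENNReal.ofReal (f i x) ∂μ :=
        lintegral_tsum fun i => (hf i).aemeasurable.ennreal_ofReal
    _ = ∑' i, ENNReal.ofReal (∫ x, f i x ∂μ) := by
        simp_rw [ofReal_integral_eq_lintegral_ofReal (hf _) (hf0 _)]

theorem ae_nonneg_of_hasSum (hf0 : ∀ i, 0 ≤ᵐ[μ] f i)
    (hfg : ∀ᵐ x ∂μ, HasSum (fun i => f i x) (g x)) : 0 ≤ᵐ[μ] g := by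
  filter_upwards [hfg, ae_all_iff.2 hf0] with x hx hx0 using hx.nonneg hx0

theorem aestronglyMeasurable_of_hasSum (hf : ∀ i, AEStronglyMeasurable (f i) μ)
    (hfg : ∀ᵐ x ∂μ, HasSum (fun i => f i x) (g x)) : AEStronglyMeasurable g μ :=
  aestronglyMeasurable_of_tendsto_ae Filter.atTop
    (fun s => Finset.aestronglyMeasurable_fun_sum s fun i _ => hf i) hfg

theorem integrable_iff_summable_integral_of_hasSum (hf : ∀ i, Integrable (f i) μ)
    (hf0 : ∀ i, 0 ≤ᵐ[μ] f i) (hfg : ∀ᵐ x ∂μ, HasSum (fun i => f i x) (g x)) :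
    Integrable g μ ↔ Summable fun i => ∫ x, f i x ∂μ := by
  have hc0 : ∀ i, 0 ≤ ∫ x, f i x ∂μ := fun i => integral_nonneg_of_ae (hf0 i)
  rw [Integrable, and_iff_right (aestronglyMeasurable_of_hasSum (fun i => (hf i).1) hfg),
    hasFiniteIntegral_iff_ofReal (ae_nonneg_of_hasSum hf0 hfg),
    lintegral_ofReal_eq_tsum_ofReal_integral hf hf0 hfg]
  refine ⟨fun h => ?_, Summable.tsum_ofReal_lt_top⟩
  simpa only [ENNReal.toReal_ofReal (hc0 _)] using ENNReal.summable_toReal h.ne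

theorem integral_eq_tsum_integral_of_hasSum (hf : ∀ i, Integrable (f i) μ)
    (hf0 : ∀ i, 0 ≤ᵐ[μ] f i) (hfg : ∀ᵐ x ∂μ, HasSum (fun i => f i x) (g x))
    (hsum : Summable fun i => ∫ x, f i x ∂μ) :
    ∫ x, g x ∂μ = ∑' i, ∫ x, f i x ∂μ := by
  have hc0 : ∀ i, 0 ≤ ∫ x, f i x ∂μ := fun i => integral_nonneg_of_ae (hf0 i)
  rw [integral_eq_lintegral_of_nonneg_ae (ae_nonneg_of_hasSum hf0 hfg)
      (aestronglyMeasurable_of_hasSum (fun i => (hf i).1) hfg),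
    lintegral_ofReal_eq_tsum_ofReal_integral hf hf0 hfg,
    ← ENNReal.ofReal_tsum_of_nonneg hc0 hsum, ENNReal.toReal_ofReal (tsum_nonneg hc0)]

end SeriesOfNonneg

theorem HilbertBasis.hasSum_norm_inner_sq {ι 𝕜 E : Type*} [RCLike 𝕜] [NormedAddCommGroup E]
    [InnerProductSpace 𝕜 E] (b : HilbertBasis ι 𝕜 E) (x : E) :
    HasSum (fun i => ‖inner 𝕜 (b i) x‖ ^ 2) (‖x‖ ^ 2) := by
  simpa [b.repr_apply_apply] using lp.hasSum_norm (p := 2) (by norm_num) (b.repr x)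

theorem ContinuousLinearMap.IsPositive.re_inner_apply_eq_norm_sqrt_apply_sq
    {E : Type*} [NormedAddCommGroup E] [InnerProductSpace ℂ E] [CompleteSpace E]
    {T : E →L[ℂ] E} (hT : T.IsPositive) (x : E) :
    (⟪x, T x⟫).re = ‖CFC.sqrt T x‖ ^ 2 := by
  have hS : IsSelfAdjoint (CFC.sqrt T) := IsSelfAdjoint.of_nonneg (CFC.sqrt_nonneg T)
  have hT' : T = (ContinuousLinearMap.adjoint (CFC.sqrt T)).comp (CFC.sqrt T) := by
    rw [hS.adjoint_eq]
    exact (CFC.sqrt_mul_sqrt_self T ((T.nonneg_iff_isPositive).2 hT)).symm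
  conv_lhs => rw [hT']
  exact ((CFC.sqrt T).apply_norm_sq_eq_inner_adjoint_right x).symm

theorem re_inner_smul_norm_inv_mul_norm_sq {E : Type*} [NormedAddCommGroup E]
    [InnerProductSpace ℂ E] (T : E →L[ℂ] E) (v : E) :
    (⟪(‖v‖⁻¹) • v, T ((‖v‖⁻¹) • v)⟫).re * ‖v‖ ^ 2 = (⟪v, T v⟫).re := by
  rcases eq_or_ne v 0 with rfl | hv
  · simp
  rw [T.map_smul_of_tower, ← Complex.coe_smul, ← Complex.coe_smul, inner_smul_left,
    inner_smul_right, Complex.conj_ofReal, ← mul_assoc, ← Complex.ofReal_mul,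
    Complex.re_ofReal_mul]
  field_simp [norm_ne_zero_iff.2 hv]

theorem hasSum_norm_sq_apply_basis_of_reproducing {ι H : Type*} [NormedAddCommGroup H]
    [InnerProductSpace ℂ H] [CompleteSpace H] (e : H →ₗ[ℂ] (ℂ → ℂ)) {z : ℂ} {k : H}
    (hrep : ∀ f : H, e f z = ⟪k, f⟫) (b : HilbertBasis ι ℂ H) (S : H →L[ℂ] H) :
    HasSum (fun i => ‖e (S (b i)) z‖ ^ 2) (‖ContinuousLinearMap.adjoint S k‖ ^ 2) := by
  simpa only [hrep, ← S.adjoint_inner_left, norm_inner_symm] using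
    b.hasSum_norm_inner_sq (ContinuousLinearMap.adjoint S k)

theorem integrableOn_norm_sq_mul_of_norm_sq_eq_integral {H : Type*} [NormedAddCommGroup H]
    [InnerProductSpace ℂ H] (ω : ℝ → ℝ) (e : H →ₗ[ℂ] (ℂ → ℂ))
    (hnormH : ∀ f : H, (‖f‖ : ℝ) ^ 2 =
      (Real.pi)⁻¹ * ∫ z in Metric.ball (0:ℂ) 1, ‖e f z‖ ^ 2 * ω ‖z‖) (f : H) :
    IntegrableOn (fun z => ‖e f z‖ ^ 2 * ω ‖z‖) (Metric.ball (0:ℂ) 1) := by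
  by_contra hf
  have hf0 : f = 0 := by simpa [integral_undef hf] using hnormH f
  simp [hf0] at hf

theorem stmt_17_general (ω : ℝ → ℝ)
    (hnn : ∀ r ∈ Set.Ico (0:ℝ) 1, 0 ≤ ω r)
    {H : Type*} [NormedAddCommGroup H] [InnerProductSpace ℂ H] [CompleteSpace H]
    (e : H →ₗ[ℂ] (ℂ → ℂ)) (B : ℂ → H)
    (hrep : ∀ (f : H) (z : ℂ), ‖z‖ < 1 → e f z = ⟪B z, f⟫)
    (hnormH : ∀ f : H, (‖f‖ : ℝ) ^ 2 =
      (Real.pi)⁻¹ * ∫ z in Metric.ball (0:ℂ) 1, ‖e f z‖ ^ 2 * ω ‖z‖)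
    (T : H →L[ℂ] H) (hT : T.IsPositive)
    (b : HilbertBasis ℕ ℂ H) :
    ((Summable fun n : ℕ => (⟪b n, T (b n)⟫).re) ↔
      MeasureTheory.IntegrableOn
        (fun z : ℂ => (⟪(‖B z‖)⁻¹ • B z, T ((‖B z‖)⁻¹ • B z)⟫).re * ‖B z‖ ^ 2 * ω ‖z‖)
        (Metric.ball (0:ℂ) 1)) ∧
    ((Summable fun n : ℕ => (⟪b n, T (b n)⟫).re) →
      (∑' n : ℕ, (⟪b n, T (b n)⟫).re) =
        (Real.pi)⁻¹ * ∫ z in Metric.ball (0:ℂ) 1,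
          (⟪(‖B z‖)⁻¹ • B z, T ((‖B z‖)⁻¹ • B z)⟫).re * ‖B z‖ ^ 2 * ω ‖z‖) := by
  set S := CFC.sqrt T
  have hS : ContinuousLinearMap.adjoint S = S :=
    (IsSelfAdjoint.of_nonneg (CFC.sqrt_nonneg T)).adjoint_eq
  set F : ℕ → ℂ → ℝ := fun n z => ‖e (S (b n)) z‖ ^ 2 * ω ‖z‖
  have hF_int : ∀ n, IntegrableOn (F n) (Metric.ball 0 1) := fun n =>
    integrableOn_norm_sq_mul_of_norm_sq_eq_integral ω e hnormH (S (b n))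
  have hF_nonneg : ∀ n, 0 ≤ᵐ[volume.restrict (Metric.ball (0:ℂ) 1)] F n := fun n =>
    ae_restrict_of_forall_mem measurableSet_ball fun z hz =>
      mul_nonneg (sq_nonneg _) (hnn _ ⟨norm_nonneg z, mem_ball_zero_iff.1 hz⟩)
  have hF_hasSum : ∀ᵐ z ∂volume.restrict (Metric.ball (0:ℂ) 1), HasSum (fun n => F n z)
      ((⟪(‖B z‖)⁻¹ • B z, T ((‖B z‖)⁻¹ • B z)⟫).re * ‖B z‖ ^ 2 * ω ‖z‖) := by
    refine ae_restrict_of_forall_mem measurableSet_ball fun z hz => ?_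
    rw [re_inner_smul_norm_inv_mul_norm_sq, hT.re_inner_apply_eq_norm_sqrt_apply_sq]
    simpa only [hS] using (hasSum_norm_sq_apply_basis_of_reproducing e
      (fun f => hrep f z (mem_ball_zero_iff.1 hz)) b S).mul_right _
  have htrace : ∀ n, (⟪b n, T (b n)⟫).re = (Real.pi)⁻¹ * ∫ z in Metric.ball (0:ℂ) 1, F n z :=
    fun n => (hT.re_inner_apply_eq_norm_sqrt_apply_sq (b n)).trans (hnormH (S (b n)))
  simp only [htrace, summable_mul_left_iff (inv_ne_zero Real.pi_ne_zero), tsum_mul_left]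
  exact ⟨(integrable_iff_summable_integral_of_hasSum hF_int hF_nonneg hF_hasSum).symm,
    fun hsum => by rw [integral_eq_tsum_integral_of_hasSum hF_int hF_nonneg hF_hasSum hsum]⟩

/-- Trace formula for positive operators on `A²_ω`, `ω ∈ 𝒟̂`: a positive operator
`T` on the reproducing kernel Hilbert space `A²_ω` (modelled abstractly by `H`,
an embedding `e` into functions, and kernels `B z`) is trace class if and only if
`∫_𝔻 T̃(z) ‖B_z‖² ω(z) dA(z) < ∞`, in which case the trace equals this integral.
Here `T̃(z) = ⟨T b_z, b_z⟩` with `b_z = B z/‖B z‖`. -/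
theorem stmt_17 (ω : ℝ → ℝ)
    (hnn : ∀ r ∈ Set.Ico (0:ℝ) 1, 0 ≤ ω r)
    (hint : MeasureTheory.IntegrableOn ω (Set.Ioc (0:ℝ) 1))
    (hpos : ∀ r ∈ Set.Ico (0:ℝ) 1, 0 < ∫ s in Set.Ioc r 1, ω s)
    (hD : ∃ C : ℝ, 1 ≤ C ∧ ∀ r ∈ Set.Ico (0:ℝ) 1,
      (∫ s in Set.Ioc r 1, ω s) ≤ C * ∫ s in Set.Ioc ((1 + r) / 2) 1, ω s)
    {H : Type*} [NormedAddCommGroup H] [InnerProductSpace ℂ H] [CompleteSpace H]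
    (e : H →ₗ[ℂ] (ℂ → ℂ)) (B : ℂ → H)
    (hrep : ∀ (f : H) (z : ℂ), ‖z‖ < 1 → e f z = ⟪B z, f⟫)
    (hnormH : ∀ f : H, (‖f‖ : ℝ) ^ 2 =
      (Real.pi)⁻¹ * ∫ z in Metric.ball (0:ℂ) 1, ‖e f z‖ ^ 2 * ω ‖z‖)
    (hBnz : ∀ z : ℂ, ‖z‖ < 1 → B z ≠ 0)
    (T : H →L[ℂ] H) (hT : T.IsPositive)
    (b : HilbertBasis ℕ ℂ H) :
    ((Summable fun n : ℕ => (⟪b n, T (b n)⟫).re) ↔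
      MeasureTheory.IntegrableOn
        (fun z : ℂ => (⟪(‖B z‖)⁻¹ • B z, T ((‖B z‖)⁻¹ • B z)⟫).re * ‖B z‖ ^ 2 * ω ‖z‖)
        (Metric.ball (0:ℂ) 1)) ∧
    ((Summable fun n : ℕ => (⟪b n, T (b n)⟫).re) →
      (∑' n : ℕ, (⟪b n, T (b n)⟫).re) =
        (Real.pi)⁻¹ * ∫ z in Metric.ball (0:ℂ) 1,
          (⟪(‖B z‖)⁻¹ • B z, T ((‖B z‖)⁻¹ • B z)⟫).re * ‖B z‖ ^ 2 * ω ‖z‖) :=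
  stmt_17_general ω hnn e B hrep hnormH T hT b
end
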